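/- For any vector r ∈ ℝ^{N−1} with entries r_2,…,r_N, the polynomial λ(τ) = ∑_{i=1}^N (A† r)_i L_i(τ) satisfies the first boundary identity of the Lobatto IIIB discontinuous collocation scheme: −λ'(−1) − λ(−1)/w_1 = −(1/w_1) ∑_{i=2}^{N} w_i r_i. -/

import Mathlib

/-!
Applying the quadrature to `(L_i L_1)'`, of degree `2N - 3`, gives the discrete summation by parts
`w_1 L_i'(-1) + w_i L_1'(τ_i) = -δ_{i1}`, hence `w_1 λ'(-1) + λ(-1) = -∑ᵢ w_i c_i L_1'(τ_i)` for
`λ = ∑ᵢ c_i L_i`. For `c = A† r` we have `w_i c_i = (Aᵀ W_{2:N} r)_i`, and since `A` integrates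
interpolants exactly, `∑ᵢ A_{ji} L_1'(τ_i) = ∫_{-1}^{τ_j} L_1' = L_1(τ_j) - L_1(-1) = -1`.
-/

open Polynomial

/-- `lagL τ i` is the `i`-th Lagrange basis polynomial (of degree `N - 1`)
for the nodes `τ 0, …, τ (N-1)`, satisfying `(lagL τ i).eval (τ j) = δᵢⱼ`. -/
noncomputable def lagL {N : ℕ} (τ : Fin N → ℝ) (i : Fin N) : ℝ[X] :=
  Lagrange.basis Finset.univ τ i

/-- `lagLp τ` is the polynomial `L_p(x) = ∏ᵢ (x - τᵢ)`. -/
noncomputable def lagLp {N : ℕ} (τ : Fin N → ℝ) : ℝ[X] :=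
  ∏ i, (X - C (τ i))

/-- The differentiation matrix `D`, with `D i j = L_j'(τ i)`. -/
noncomputable def matD {N : ℕ} (τ : Fin N → ℝ) : Matrix (Fin N) (Fin N) ℝ :=
  fun i j => (derivative (lagL τ j)).eval (τ i)

/-- The vector `D_p`, with `(D_p) i = L_p'(τ i)`. -/
noncomputable def vecDp {N : ℕ} (τ : Fin N → ℝ) : Fin N → ℝ :=
  fun i => (derivative (lagLp τ)).eval (τ i)

/-- Columns `2, …, N+1` (in 1-based numbering) of the augmented differentiation
matrix `D̃ = [D  D_p]`: column `j` (0-based, `j < N - 1`) is column `j + 1` of `D`,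
and the last column is `D_p`. -/
noncomputable def matDtil2 {N : ℕ} (τ : Fin N → ℝ) : Matrix (Fin N) (Fin N) ℝ :=
  fun i j => if h : (j : ℕ) + 1 < N then matD τ i ⟨(j : ℕ) + 1, h⟩ else vecDp τ i

/-- The quadrature rule with nodes `τ` and weights `w` integrates exactly all
polynomials of degree at most `2 * N - 3` over `[-1, 1]`. -/
def IsQuadrature {N : ℕ} (τ : Fin N → ℝ) (w : Fin N → ℝ) : Prop :=
  ∀ p : ℝ[X], p.natDegree ≤ 2 * N - 3 →
    ∑ i, w i * p.eval (τ i) = ∫ t in (-1 : ℝ)..1, p.eval t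

/-- The integration matrix `A` with rows indexed (0-based) by `i : Fin (N-1)`
corresponding to the node `τ (i+1)`: `A i j = ∫_{-1}^{τ (i+1)} L_j(t) dt`. -/
noncomputable def matA {N : ℕ} (τ : Fin N → ℝ) : Matrix (Fin (N - 1)) (Fin N) ℝ :=
  fun i j => ∫ t in (-1 : ℝ)..(τ ⟨(i : ℕ) + 1, by have := i.isLt; omega⟩), (lagL τ j).eval t

/-- The row vector `A_p`, with `(A_p) j = (1/N) ∏_{k ≠ j} 1 / (τ j - τ k)`. -/
noncomputable def rowAp {N : ℕ} (τ : Fin N → ℝ) : Fin N → ℝ :=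
  fun j => (1 / (N : ℝ)) * ∏ k ∈ Finset.univ.erase j, (τ j - τ k)⁻¹

/-- The matrix `Ã` obtained by stacking `A` on top of the row vector `A_p`. -/
noncomputable def matAtil {N : ℕ} (τ : Fin N → ℝ) : Matrix (Fin N) (Fin N) ℝ :=
  fun i j => if h : (i : ℕ) + 1 < N then matA τ ⟨(i : ℕ), by omega⟩ j else rowAp τ j

/-- The adjoint integration matrix `A† = W⁻¹ Aᵀ W_{2:N}`, with columns indexed
(0-based) by `j : Fin (N-1)` corresponding to the node `τ (j+1)`. -/
noncomputable def matAdag {N : ℕ} (τ : Fin N → ℝ) (w : Fin N → ℝ) :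
    Matrix (Fin N) (Fin (N - 1)) ℝ :=
  fun i j => (w i)⁻¹ * matA τ j i * w ⟨(j : ℕ) + 1, by have := j.isLt; omega⟩

/-- `polyM τ k` is the Lagrange basis polynomial (of degree `N - 3`) for the
interior nodes `τ 1, …, τ (N-2)`, satisfying `(polyM τ k).eval (τ m) = δₖₘ`
for interior indices `m`. -/
noncomputable def polyM {N : ℕ} (τ : Fin N → ℝ) (k : Fin N) : ℝ[X] :=
  Lagrange.basis (Finset.univ.filter fun m : Fin N => 0 < (m : ℕ) ∧ (m : ℕ) < N - 1) τ k

/-- The polynomial `λ(x) = ∑ᵢ (A† r)ᵢ Lᵢ(x)`. -/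
noncomputable def lamP {N : ℕ} (τ : Fin N → ℝ) (w : Fin N → ℝ) (r : Fin (N - 1) → ℝ) : ℝ[X] :=
  ∑ i, C ((matAdag τ w).mulVec r i) * lagL τ i

section

variable {N : ℕ} {τ w : Fin N → ℝ}

lemma eval_lagL (hτ : Function.Injective τ) (i j : Fin N) :
    (lagL τ i).eval (τ j) = if i = j then 1 else 0 := by
  rcases eq_or_ne i j with rfl | hij
  · simp [lagL, Lagrange.eval_basis_self hτ.injOn (Finset.mem_univ i)]
  · simp [lagL, Lagrange.eval_basis_of_ne hij (Finset.mem_univ j), hij]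

lemma natDegree_lagL (hτ : Function.Injective τ) (i : Fin N) :
    (lagL τ i).natDegree = N - 1 := by
  simpa [lagL] using Lagrange.natDegree_basis hτ.injOn (Finset.mem_univ i)

lemma eval_sum_C_mul_lagL (hτ : Function.Injective τ) (c : Fin N → ℝ) (k : Fin N) :
    (∑ i, C (c i) * lagL τ i).eval (τ k) = c k := by
  simp [eval_finsetSum, eval_lagL hτ]

lemma sum_C_eval_mul_lagL (hτ : Function.Injective τ) {p : ℝ[X]} (hp : p.degree < N) :
    ∑ i, C (p.eval (τ i)) * lagL τ i = p := by
  have := Lagrange.eq_interpolate (s := Finset.univ) (f := p) hτ.injOn (by simpa using hp)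
  rw [Lagrange.interpolate_apply] at this
  exact this.symm

lemma Polynomial.integral_eval_derivative (p : ℝ[X]) (a b : ℝ) :
    ∫ t in a..b, (derivative p).eval t = p.eval b - p.eval a :=
  intervalIntegral.integral_eq_sub_of_hasDerivAt (fun x _ => p.hasDerivAt x)
    ((derivative p).continuous.intervalIntegrable a b)

lemma sum_integral_lagL_mul_eval (hτ : Function.Injective τ) {p : ℝ[X]} (hp : p.degree < N)
    (a b : ℝ) :
    ∑ i, (∫ t in a..b, (lagL τ i).eval t) * p.eval (τ i) = ∫ t in a..b, p.eval t := by
  conv_rhs => rw [← sum_C_eval_mul_lagL hτ hp]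
  simp_rw [eval_finsetSum, eval_mul, eval_C]
  rw [intervalIntegral.integral_finsetSum (f := fun i t => p.eval (τ i) * (lagL τ i).eval t)
    fun i _ => (continuous_const.mul (lagL τ i).continuous).intervalIntegrable a b]
  simp_rw [intervalIntegral.integral_const_mul, mul_comm]

lemma degree_derivative_lagL_lt (hτ : Function.Injective τ) (i : Fin N) :
    (derivative (lagL τ i)).degree < N := by
  refine degree_derivative_le.trans_lt (degree_le_natDegree.trans_lt ?_)
  rw [natDegree_lagL hτ]
  exact_mod_cast Nat.sub_lt (Fin.pos i) one_pos

lemma IsQuadrature.sum_mul_eval_derivative (hq : IsQuadrature τ w) {p : ℝ[X]}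
    (hp : p.natDegree ≤ 2 * N - 2) :
    ∑ i, w i * (derivative p).eval (τ i) = p.eval 1 - p.eval (-1) := by
  rw [hq _ ((natDegree_derivative_le p).trans (by omega)), integral_eval_derivative]

lemma IsQuadrature.mul_derivative_lagL_add (hq : IsQuadrature τ w) (hτ : Function.Injective τ)
    (i k : Fin N) :
    w k * (derivative (lagL τ i)).eval (τ k) + w i * (derivative (lagL τ k)).eval (τ i) =
      (lagL τ i * lagL τ k).eval 1 - (lagL τ i * lagL τ k).eval (-1) := by
  have hdeg : (lagL τ i * lagL τ k).natDegree ≤ 2 * N - 2 := by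
    refine natDegree_mul_le.trans ?_
    rw [natDegree_lagL hτ, natDegree_lagL hτ]
    omega
  rw [← IsQuadrature.sum_mul_eval_derivative hq hdeg]
  simp [derivative_mul, eval_lagL hτ, mul_add, Finset.sum_add_distrib]

lemma IsQuadrature.mul_derivative_lagL_eval_neg_one (hq : IsQuadrature τ w)
    (hτ : Function.Injective τ) {z e : Fin N} (hz : τ z = -1) (he : τ e = 1) (hze : z ≠ e)
    (i : Fin N) :
    w z * (derivative (lagL τ i)).eval (-1) =
      -(if i = z then 1 else 0) - w i * (derivative (lagL τ z)).eval (τ i) := by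
  have := IsQuadrature.mul_derivative_lagL_add hq hτ i z
  rw [eval_mul, eval_mul, ← hz, ← he, eval_lagL hτ i e, eval_lagL hτ z e, if_neg hze,
    eval_lagL hτ z z, if_pos rfl, eval_lagL hτ i z] at this
  rw [← hz]
  split_ifs at this ⊢ <;> linarith

lemma IsQuadrature.mul_derivative_eval_neg_one_add_eval (hq : IsQuadrature τ w)
    (hτ : Function.Injective τ) {z e : Fin N} (hz : τ z = -1) (he : τ e = 1) (hze : z ≠ e)
    (c : Fin N → ℝ) :
    w z * (derivative (∑ i, C (c i) * lagL τ i)).eval (-1) + (∑ i, C (c i) * lagL τ i).eval (-1) =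
      -∑ i, w i * c i * (derivative (lagL τ z)).eval (τ i) := by
  have hsum : w z * (derivative (∑ i, C (c i) * lagL τ i)).eval (-1) =
      ∑ i, c i * (w z * (derivative (lagL τ i)).eval (-1)) := by
    simp only [derivative_sum, derivative_C_mul, eval_finsetSum, eval_mul, eval_C,
      Finset.mul_sum]
    ring_nf
  rw [hsum, ← hz, eval_sum_C_mul_lagL hτ, hz]
  simp only [IsQuadrature.mul_derivative_lagL_eval_neg_one hq hτ hz he hze, mul_sub,
    Finset.sum_sub_distrib, mul_neg, mul_ite, mul_one, mul_zero, Finset.sum_neg_distrib,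
    Finset.sum_ite_eq', Finset.mem_univ, if_true, mul_left_comm (c _), mul_assoc]
  ring

def nodeSucc (j : Fin (N - 1)) : Fin N := ⟨j + 1, by omega⟩

lemma mul_matAdag_mulVec (hw : ∀ i, w i ≠ 0) (r : Fin (N - 1) → ℝ) (i : Fin N) :
    w i * ((matAdag τ w).mulVec r) i = ∑ j, matA τ j i * (w (nodeSucc j) * r j) := by
  simp only [Matrix.mulVec, dotProduct, matAdag, Finset.mul_sum]
  refine Finset.sum_congr rfl fun j _ => ?_
  field_simp [hw i]
  unfold nodeSucc
  ring

lemma sum_mul_matAdag_mulVec_mul_eval (hτ : Function.Injective τ) (hw : ∀ i, w i ≠ 0)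
    {p : ℝ[X]} (hp : p.degree < N) (r : Fin (N - 1) → ℝ) :
    ∑ i, w i * ((matAdag τ w).mulVec r) i * p.eval (τ i) =
      ∑ j, w (nodeSucc j) * r j * ∫ t in (-1 : ℝ)..τ (nodeSucc j), p.eval t := by
  simp only [mul_matAdag_mulVec hw, Finset.sum_mul]
  rw [Finset.sum_comm]
  refine Finset.sum_congr rfl fun j _ => ?_
  rw [← sum_integral_lagL_mul_eval hτ hp, Finset.mul_sum]
  refine Finset.sum_congr rfl fun i _ => ?_
  simp only [matA, nodeSucc]
  ring

end

/-- First boundary identity: `-λ'(-1) - λ(-1)/w₁ = -(1/w₁) ∑_{i=2}^{N} wᵢ rᵢ`. -/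
theorem stmt13 (N : ℕ) (hN : 3 ≤ N) (τ : Fin N → ℝ) (hmono : StrictMono τ)
    (h0 : τ ⟨0, by omega⟩ = -1) (h1 : τ ⟨N - 1, by omega⟩ = 1) (w : Fin N → ℝ) (hw : ∀ i, 0 < w i) (hquad : IsQuadrature τ w) :
    ∀ r : Fin (N - 1) → ℝ,
      - (derivative (lamP τ w r)).eval (-1) - (lamP τ w r).eval (-1) / w ⟨0, by omega⟩ =
        - (1 / w ⟨0, by omega⟩) *
            ∑ j : Fin (N - 1), w ⟨(j : ℕ) + 1, by have := j.isLt; omega⟩ * r j := by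
  intro r
  have hτ := hmono.injective
  have hwz := (hw ⟨0, by omega⟩).ne'
  have hze : (⟨0, by omega⟩ : Fin N) ≠ ⟨N - 1, by omega⟩ := by
    simp only [ne_eq, Fin.mk.injEq]
    omega
  have hint (j : Fin (N - 1)) :
      ∫ t in (-1 : ℝ)..τ (nodeSucc j), (derivative (lagL τ ⟨0, by omega⟩)).eval t = -1 := by
    rw [Polynomial.integral_eval_derivative, ← h0, eval_lagL hτ, eval_lagL hτ, if_neg, if_pos rfl,
      h0]
    · ring
    · simp [nodeSucc, Fin.ext_iff]
  have key := IsQuadrature.mul_derivative_eval_neg_one_add_eval hquad hτ h0 h1 hze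
    ((matAdag τ w).mulVec r)
  rw [sum_mul_matAdag_mulVec_mul_eval hτ (fun i => (hw i).ne') (degree_derivative_lagL_lt hτ _)]
    at key
  simp only [hint, mul_neg, mul_one, Finset.sum_neg_distrib, neg_neg] at key
  rw [← lamP] at key
  unfold nodeSucc at key
  field_simp
  linear_combination -key
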